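/- arXiv:2209.14488 — 5 statements merged into one kernel-verified Lean document; each statement's English description precedes it below -/
import Mathlib

section
/- Let n ≥ 1, let A be an n×n real symmetric positive-definite matrix, let θ* ∈ ℝⁿ, let h > 0 and ρ0 ∈ ℝ with 0 < ρ0 < 1/2, and suppose that h·λ < 2 − 4ρ0 for every eigenvalue λ of A. If a sequence x : ℕ → ℝⁿ satisfies the three-step recurrence x_{k+3} = (1 − ρ0)·x_{k+2} + 2ρ0·x_{k+1} − ρ0·x_k − h·A·(x_{k+2} − θ*) for all k ≥ 0, then x_k converges to θ* as k → ∞. -/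
/-!
Since the coefficients `1 - ρ0`, `2ρ0`, `-ρ0` sum to `1`, the error `x k - θ*` satisfies the
homogeneous recurrence. Diagonalising `A` orthogonally decouples it into scalar recurrences
`y (k+3) = (1 - ρ0 - μ) y (k+2) + 2ρ0 y (k+1) - ρ0 y k` with `μ = hλ`, one per eigenvalue `λ`.
The Cayley transform `w = (z - 1) / (z + 1)` turns the characteristic cubic into
`(2 - 4ρ0 - μ) w³ + (4 + 4ρ0 - μ) w² + (2 + μ) w + μ`, which is Hurwitz stable by the
Routh–Hurwitz criterion, so all characteristic roots lie in the open unit disc. Factoring the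
recurrence along its three roots reduces convergence to three perturbed geometric recurrences
`u (k+1) = r u k + v k` with `‖r‖ < 1` and `v → 0`.
-/

open Filter Topology Matrix

theorem IsAlgClosed.exists_vieta_cubic {K : Type*} [Field K] [IsAlgClosed K] (a b c : K) :
    ∃ r₁ r₂ r₃ : K, a = r₁ + r₂ + r₃ ∧ b = -(r₁ * r₂ + r₁ * r₃ + r₂ * r₃) ∧ c = r₁ * r₂ * r₃ := by
  let P : Cubic K := ⟨1, -a, -b, -c⟩
  have hP : P.a ≠ 0 := one_ne_zero
  obtain ⟨r₁, r₂, r₃, hroots⟩ :=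
    (Cubic.splits_iff_roots_eq_three (φ := RingHom.id K) hP).mp (IsAlgClosed.splits _)
  obtain ⟨-, ha, hb, hc⟩ := Cubic.mk.inj (Cubic.eq_sum_three_roots hP hroots)
  simp only [RingHom.id_apply, one_mul, P] at ha hb hc
  exact ⟨r₁, r₂, r₃, by linear_combination -ha, by linear_combination -hb,
    by linear_combination -hc⟩

section Recurrence

variable {𝕜 E : Type*} [NormedField 𝕜] [NormedAddCommGroup E] [NormedSpace 𝕜 E]
  {r : 𝕜} {u v : ℕ → E}

theorem norm_le_pow_mul_add_of_eq_smul_add (hr : ‖r‖ < 1) (hu : ∀ k, u (k + 1) = r • u k + v k)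
    {N : ℕ} {δ : ℝ} (hv : ∀ k ≥ N, ‖v k‖ ≤ δ) (m : ℕ) :
    ‖u (N + m)‖ ≤ ‖r‖ ^ m * ‖u N‖ + δ / (1 - ‖r‖) := by
  have hδ : 0 ≤ δ := (norm_nonneg _).trans (hv N le_rfl)
  have hs : 0 < 1 - ‖r‖ := sub_pos.mpr hr
  induction m with
  | zero => simpa using div_nonneg hδ hs.le
  | succ m ih =>
    calc ‖u (N + (m + 1))‖ ≤ ‖r‖ * ‖u (N + m)‖ + δ := by
          rw [← add_assoc, hu, ← norm_smul]
          exact (norm_add_le _ _).trans (by gcongr; exact hv _ (Nat.le_add_right N m))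
      _ ≤ ‖r‖ * (‖r‖ ^ m * ‖u N‖ + δ / (1 - ‖r‖)) + δ := by gcongr
      _ = ‖r‖ ^ (m + 1) * ‖u N‖ + δ / (1 - ‖r‖) := by field_simp; ring

theorem tendsto_zero_of_eq_smul_add (hr : ‖r‖ < 1) (hv : Tendsto v atTop (𝓝 0))
    (hu : ∀ k, u (k + 1) = r • u k + v k) : Tendsto u atTop (𝓝 0) := by
  rw [NormedAddGroup.tendsto_nhds_zero] at hv ⊢
  intro ε hε
  have hs : 0 < 1 - ‖r‖ := sub_pos.mpr hr
  obtain ⟨N, hN⟩ := eventually_atTop.mp (hv (ε / 2 * (1 - ‖r‖)) (by positivity))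
  have hpow : Tendsto (fun m ↦ ‖r‖ ^ m * ‖u N‖) atTop (𝓝 0) := by
    simpa using (tendsto_pow_atTop_nhds_zero_of_lt_one (norm_nonneg r) hr).mul_const ‖u N‖
  obtain ⟨M, hM⟩ := eventually_atTop.mp (hpow.eventually (gt_mem_nhds (half_pos hε)))
  refine eventually_atTop.mpr ⟨N + M, fun k hk ↦ ?_⟩
  obtain ⟨m, rfl⟩ := Nat.exists_eq_add_of_le (le_of_add_le_left hk)
  calc ‖u (N + m)‖ ≤ ‖r‖ ^ m * ‖u N‖ + ε / 2 * (1 - ‖r‖) / (1 - ‖r‖) :=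
        norm_le_pow_mul_add_of_eq_smul_add hr hu (fun k hk ↦ (hN k hk).le) m
    _ < ε / 2 + ε / 2 := by rw [mul_div_cancel_right₀ _ hs.ne']; gcongr; exact hM m (by omega)
    _ = ε := add_halves ε

theorem tendsto_zero_of_three_roots_recurrence {r₁ r₂ r₃ : 𝕜} (h₁ : ‖r₁‖ < 1) (h₂ : ‖r₂‖ < 1)
    (h₃ : ‖r₃‖ < 1) {y : ℕ → E}
    (hy : ∀ k, y (k + 3) = (r₁ + r₂ + r₃) • y (k + 2)
      - (r₁ * r₂ + r₁ * r₃ + r₂ * r₃) • y (k + 1) + (r₁ * r₂ * r₃) • y k) :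
    Tendsto y atTop (𝓝 0) := by
  set u : ℕ → E := fun k ↦ y (k + 1) - r₁ • y k
  set v : ℕ → E := fun k ↦ u (k + 1) - r₂ • u k
  have hv : Tendsto v atTop (𝓝 0) :=
    tendsto_zero_of_eq_smul_add h₃ tendsto_const_nhds fun k ↦ by
      simp only [v, u, hy]; module
  have hu : Tendsto u atTop (𝓝 0) :=
    tendsto_zero_of_eq_smul_add h₂ hv fun k ↦ by simp only [v]; abel
  exact tendsto_zero_of_eq_smul_add h₁ hu fun k ↦ by simp only [u]; abel

end Recurrence

theorem tendsto_zero_of_cubic_recurrence {a b c : ℝ}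
    (hroots : ∀ z : ℂ, z ^ 3 = a * z ^ 2 + b * z + c → ‖z‖ < 1) {y : ℕ → ℝ}
    (hy : ∀ k, y (k + 3) = a * y (k + 2) + b * y (k + 1) + c * y k) :
    Tendsto y atTop (𝓝 0) := by
  obtain ⟨r₁, r₂, r₃, ha, hb, hc⟩ := IsAlgClosed.exists_vieta_cubic (a : ℂ) b c
  have hr : ∀ r, (r - r₁) * (r - r₂) * (r - r₃) = 0 → ‖r‖ < 1 := fun r hr ↦
    hroots r (by rw [ha, hb, hc]; linear_combination hr)
  have hY : Tendsto (fun k ↦ (y k : ℂ)) atTop (𝓝 0) :=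
    tendsto_zero_of_three_roots_recurrence (hr r₁ (by ring)) (hr r₂ (by ring)) (hr r₃ (by ring))
      fun k ↦ by
        simp only [smul_eq_mul, ← ha, ← hc, hy]
        push_cast
        linear_combination (y (k + 1) : ℂ) * hb
  exact (Complex.continuous_re.tendsto 0).comp hY

theorem re_lt_zero_of_hurwitz_cubic {a₃ a₂ a₁ a₀ : ℝ} (h₃ : 0 < a₃) (h₂ : 0 < a₂) (h₁ : 0 < a₁)
    (h₀ : 0 < a₀) (hurwitz : a₀ * a₃ < a₁ * a₂) {w : ℂ}
    (hw : a₃ * w ^ 3 + a₂ * w ^ 2 + a₁ * w + a₀ = 0) : w.re < 0 := by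
  obtain ⟨x, y⟩ := w
  simp only [Complex.ext_iff, pow_succ, pow_zero, one_mul, Complex.mul_re, Complex.mul_im,
    Complex.add_re, Complex.add_im, Complex.ofReal_re, Complex.ofReal_im, Complex.zero_re,
    Complex.zero_im] at hw
  obtain ⟨hre, him⟩ := hw
  by_contra! hx
  have him' : y * (3 * a₃ * x ^ 2 - a₃ * y ^ 2 + 2 * a₂ * x + a₁) = 0 := by
    linear_combination him
  rcases mul_eq_zero.mp him' with rfl | hy
  · nlinarith [mul_nonneg h₃.le (pow_nonneg hx 3), mul_nonneg h₂.le (sq_nonneg x),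
      mul_nonneg h₁.le hx]
  · -- eliminating `y ^ 2` leaves a polynomial in `x` with nonnegative coefficients
    -- and constant term `a₁ a₂ - a₀ a₃`
    have key : 8 * a₃ ^ 2 * x ^ 3 + 8 * a₃ * a₂ * x ^ 2 + 2 * (a₃ * a₁ + a₂ ^ 2) * x
        + (a₁ * a₂ - a₀ * a₃) = 0 := by
      linear_combination (-a₃) * hre + (3 * a₃ * x + a₂) * hy
    nlinarith [mul_nonneg (sq_nonneg a₃) (pow_nonneg hx 3),
      mul_nonneg (mul_pos h₃ h₂).le (sq_nonneg x),
      mul_nonneg (add_pos (mul_pos h₃ h₁) (pow_pos h₂ 2)).le hx]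

theorem Complex.re_sub_one_div_add_one_nonneg {z : ℂ} (hz : 1 ≤ ‖z‖) :
    0 ≤ ((z - 1) / (z + 1)).re := by
  rw [Complex.div_re, ← add_div]
  refine div_nonneg ?_ (Complex.normSq_nonneg _)
  have : (z - 1).re * (z + 1).re + (z - 1).im * (z + 1).im = Complex.normSq z - 1 := by
    simp only [Complex.normSq_apply, Complex.add_re, Complex.sub_re, Complex.add_im,
      Complex.sub_im, Complex.one_re, Complex.one_im]
    ring
  rw [this, sub_nonneg, ← Complex.sq_norm]
  exact one_le_pow₀ hz

theorem norm_lt_one_of_threeStep_charPoly_root {ρ μ : ℝ} (hρ : 0 < ρ) (hμ : 0 < μ)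
    (hμρ : μ < 2 - 4 * ρ) {z : ℂ} (hz : z ^ 3 = (1 - ρ - μ) * z ^ 2 + 2 * ρ * z - ρ) : ‖z‖ < 1 := by
  by_contra! hz1
  have hz_ne : z + 1 ≠ 0 := by
    intro h
    rw [eq_neg_of_add_eq_zero_left h] at hz
    have : ((2 - 4 * ρ - μ : ℝ) : ℂ) = 0 := by push_cast; linear_combination -hz
    exact (sub_pos.mpr hμρ).ne' (by exact_mod_cast this)
  set w := (z - 1) / (z + 1)
  have hw : ((2 - 4 * ρ - μ : ℝ) : ℂ) * w ^ 3 + (4 + 4 * ρ - μ : ℝ) * w ^ 2 + (2 + μ : ℝ) * w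
      + (μ : ℝ) = 0 := by
    simp only [w]
    field_simp
    push_cast
    linear_combination 8 * hz
  exact (Complex.re_sub_one_div_add_one_nonneg hz1).not_gt <|
    re_lt_zero_of_hurwitz_cubic (by linarith) (by linarith) (by linarith) hμ (by nlinarith) hw

theorem Matrix.IsHermitian.star_eigenvectorUnitary_mul {𝕜 n : Type*} [RCLike 𝕜] [Fintype n]
    [DecidableEq n] {A : Matrix n n 𝕜} (hA : A.IsHermitian) :
    star (hA.eigenvectorUnitary : Matrix n n 𝕜) * A =
      diagonal (RCLike.ofReal ∘ hA.eigenvalues) * star (hA.eigenvectorUnitary : Matrix n n 𝕜) := by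
  rw [← hA.conjStarAlgAut_star_eigenvectorUnitary, Unitary.conjStarAlgAut_star_apply, mul_assoc,
    Unitary.mul_star_self_of_mem hA.eigenvectorUnitary.2, mul_one]

section MatrixRecurrence

variable {R m : Type*} [CommRing R] [Fintype m] {A : Matrix m m R} {a b c h : R}

theorem sub_recurrence_of_add_sub_eq_one (habc : a + b - c = 1) {θ : m → R} {x : ℕ → m → R}
    (hx : ∀ k, x (k + 3) = a • x (k + 2) + b • x (k + 1) - c • x k - h • A *ᵥ (x (k + 2) - θ))
    (k : ℕ) :
    x (k + 3) - θ = a • (x (k + 2) - θ) + b • (x (k + 1) - θ) - c • (x k - θ)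
      - h • A *ᵥ (x (k + 2) - θ) := by
  rw [hx]
  linear_combination (norm := module) habc • θ

theorem mulVec_apply_recurrence [DecidableEq m] {P : Matrix m m R} {d : m → R}
    (hPA : P * A = diagonal d * P) {e : ℕ → m → R}
    (he : ∀ k, e (k + 3) = a • e (k + 2) + b • e (k + 1) - c • e k - h • A *ᵥ e (k + 2))
    (i : m) (k : ℕ) :
    (P *ᵥ e (k + 3)) i =
      (a - h * d i) * (P *ᵥ e (k + 2)) i + b * (P *ᵥ e (k + 1)) i + -c * (P *ᵥ e k) i := by
  rw [he, mulVec_sub, mulVec_sub, mulVec_add, mulVec_smul, mulVec_smul, mulVec_smul, mulVec_smul,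
    mulVec_mulVec, hPA, ← mulVec_mulVec]
  simp only [Pi.sub_apply, Pi.add_apply, Pi.smul_apply, smul_eq_mul, mulVec_diagonal]
  ring

end MatrixRecurrence

theorem Matrix.tendsto_zero_of_forall_mulVec_apply {R m : Type*} [CommRing R] [TopologicalSpace R]
    [IsTopologicalRing R] [Fintype m] [DecidableEq m] {P Q : Matrix m m R} (hQP : Q * P = 1)
    {e : ℕ → m → R}
    (he : ∀ i, Tendsto (fun k ↦ (P *ᵥ e k) i) atTop (𝓝 0)) : Tendsto e atTop (𝓝 0) := by
  have hQ : Tendsto (fun k ↦ Q *ᵥ (P *ᵥ e k)) atTop (𝓝 (Q *ᵥ 0)) :=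
    (Continuous.matrix_mulVec continuous_const continuous_id).continuousAt.tendsto.comp
      (tendsto_pi_nhds.mpr he)
  simpa only [mulVec_mulVec, hQP, one_mulVec, mulVec_zero] using hQ

theorem multi_step_converges_matrix_general
    (n : ℕ) (A : Matrix (Fin n) (Fin n) ℝ)
    (hA : A.PosDef) (θstar : Fin n → ℝ) (h ρ0 : ℝ) (hh : 0 < h)
    (hρ0 : 0 < ρ0)
    (heig : ∀ lam ∈ spectrum ℝ A, h * lam < 2 - 4 * ρ0)
    (x : ℕ → Fin n → ℝ)
    (hx : ∀ k : ℕ, x (k + 3) =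
      (1 - ρ0) • x (k + 2) + (2 * ρ0) • x (k + 1) - ρ0 • x k
        - h • A.mulVec (x (k + 2) - θstar)) :
    Filter.Tendsto x Filter.atTop (nhds θstar) := by
  set U : Matrix (Fin n) (Fin n) ℝ := (hA.1.eigenvectorUnitary : Matrix (Fin n) (Fin n) ℝ)
  have he := sub_recurrence_of_add_sub_eq_one (by ring) hx
  have hcoord : ∀ i, Tendsto (fun k ↦ (star U *ᵥ (x k - θstar)) i) atTop (𝓝 0) := by
    intro i
    have hμ : 0 < h * hA.1.eigenvalues i := mul_pos hh (hA.eigenvalues_pos i)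
    have hμρ := heig _ (hA.1.eigenvalues_mem_spectrum_real i)
    refine tendsto_zero_of_cubic_recurrence
      (fun z hz ↦ norm_lt_one_of_threeStep_charPoly_root hρ0 hμ hμρ ?_)
      (mulVec_apply_recurrence (e := fun k ↦ x k - θstar) hA.1.star_eigenvectorUnitary_mul he i)
    simp only [Function.comp_apply, RCLike.ofReal_real_eq_id, id_eq] at hz
    push_cast at hz ⊢
    linear_combination hz
  simpa using (tendsto_zero_of_forall_mulVec_apply
    (Unitary.mul_star_self_of_mem hA.1.eigenvectorUnitary.2) hcoord).add_const θstar

/-- Proposition 1 (matrix form): the 3-step method with consistency coefficients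
converges to the optimum for a symmetric positive definite linearized gradient,
provided `0 < ρ0 < 1/2` and `h·λ < 2 − 4ρ0` for every eigenvalue `λ` of `A`. -/
theorem multi_step_converges_matrix
    (n : ℕ) (hn : 1 ≤ n) (A : Matrix (Fin n) (Fin n) ℝ)
    (hA : A.PosDef) (θstar : Fin n → ℝ) (h ρ0 : ℝ) (hh : 0 < h)
    (hρ0 : 0 < ρ0) (hρ0' : ρ0 < 1 / 2)
    (heig : ∀ lam ∈ spectrum ℝ A, h * lam < 2 - 4 * ρ0)
    (x : ℕ → Fin n → ℝ)
    (hx : ∀ k : ℕ, x (k + 3) =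
      (1 - ρ0) • x (k + 2) + (2 * ρ0) • x (k + 1) - ρ0 • x k
        - h • A.mulVec (x (k + 2) - θstar)) :
    Filter.Tendsto x Filter.atTop (nhds θstar) :=
  multi_step_converges_matrix_general n A hA θstar h ρ0 hh hρ0 heig x hx
end

section
/- Let λ > 0, h > 0 and ρ0 ∈ ℝ with 0 < ρ0 < 1/2 and λ·h < 2 − 4ρ0, and let θ* ∈ ℝ. If a real sequence x : ℕ → ℝ satisfies x_{k+3} = (1 − ρ0)·x_{k+2} + 2ρ0·x_{k+1} − ρ0·x_k − h·λ·(x_{k+2} − θ*) for all k ≥ 0, then x_k converges to θ* as k → ∞. -/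
/-!
With `S` the shift operator on sequences, `y = x - θ*` satisfies `p(S) y = 0` for the
characteristic polynomial `p(w) = w³ + (ρ₀ - 1 + hλ) w² - 2ρ₀ w + ρ₀`. Over `ℂ`, `p` is a product
of factors `X - z`, and peeling them off one at a time reduces convergence to the fact that
`u (n + 1) - z u n → 0` with `‖z‖ < 1` forces `u → 0`. Every root lies in the open unit disc: a
real root by the sign of `p` on `(-∞, -1]` and on `[1, ∞)`; for a non-real root `z`, the conjugate
pair splits off as `p(w) = (w - r) |w - z|²` for real `w`, so `p(-ρ₀) > 0` gives `r < -ρ₀`, and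
then `r |z|² = -ρ₀` gives `|z|² < 1`.
-/

open Filter Topology Polynomial

theorem tendsto_zero_of_le_mul_add {c : ℝ} (hc₀ : 0 ≤ c) (hc₁ : c < 1) {r e : ℕ → ℝ}
    (hr : ∀ n, 0 ≤ r n) (he : Tendsto e atTop (𝓝 0))
    (hrec : ∀ n, r (n + 1) ≤ c * r n + e n) : Tendsto r atTop (𝓝 0) := by
  refine tendsto_order.2 ⟨fun δ hδ => .of_forall fun n => hδ.trans_le (hr n), fun δ hδ => ?_⟩
  obtain ⟨N, hN⟩ := eventually_atTop.1 <|
    he.eventually (ge_mem_nhds (show 0 < (1 - c) * (δ / 2) by nlinarith))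
  have hdecay : ∀ j, r (j + N) - δ / 2 ≤ c ^ j * (r N - δ / 2) := by
    intro j
    induction j with
    | zero => simp
    | succ j ih =>
      calc r (j + 1 + N) - δ / 2 ≤ c * (r (j + N) - δ / 2) := by
            rw [add_right_comm]; linarith [hrec (j + N), hN (j + N) (by omega)]
        _ ≤ c ^ (j + 1) * (r N - δ / 2) := by rw [pow_succ', mul_assoc]; gcongr
  have hsmall : ∀ᶠ j in atTop, c ^ j * (r N - δ / 2) < δ / 2 :=
    ((tendsto_pow_atTop_nhds_zero_of_lt_one hc₀ hc₁).mul_const _).eventually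
      (gt_mem_nhds (by simpa using half_pos hδ))
  obtain ⟨M, hM⟩ := eventually_atTop.1 hsmall
  refine eventually_atTop.2 ⟨M + N, fun n hn => ?_⟩
  obtain ⟨j, rfl⟩ : ∃ j, n = j + N := ⟨n - N, by omega⟩
  linarith [hdecay j, hM j (by omega)]

section Shift

variable (R M : Type*) [CommSemiring R] [AddCommMonoid M] [Module R M]

def seqShift : Module.End R (ℕ → M) := LinearMap.funLeft R M (· + 1)

variable {R M}

theorem seqShift_apply (u : ℕ → M) (n : ℕ) : seqShift R M u n = u (n + 1) := rfl

theorem seqShift_pow_apply (k : ℕ) (u : ℕ → M) (n : ℕ) :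
    (seqShift R M ^ k) u n = u (n + k) := by
  induction k generalizing n with
  | zero => rfl
  | succ k ih =>
    rw [pow_succ', Module.End.mul_apply, seqShift_apply, ih, add_right_comm, add_assoc]

end Shift

section Normed

variable {𝕜 E : Type*} [NormedField 𝕜] [SeminormedAddCommGroup E] [NormedSpace 𝕜 E]

theorem tendsto_zero_of_tendsto_sub_smul {a : 𝕜} (ha : ‖a‖ < 1) {u : ℕ → E}
    (h : Tendsto (fun n => u (n + 1) - a • u n) atTop (𝓝 0)) : Tendsto u atTop (𝓝 0) := by
  refine tendsto_zero_iff_norm_tendsto_zero.2 <|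
    tendsto_zero_of_le_mul_add (norm_nonneg a) ha (fun n => norm_nonneg _)
      (tendsto_zero_iff_norm_tendsto_zero.1 h) fun n => ?_
  calc ‖u (n + 1)‖ = ‖a • u n + (u (n + 1) - a • u n)‖ := by rw [add_sub_cancel]
    _ ≤ ‖a‖ * ‖u n‖ + ‖u (n + 1) - a • u n‖ := (norm_add_le _ _).trans_eq (by rw [norm_smul])

theorem aeval_seqShift_X_sub_C (a : 𝕜) (u : ℕ → E) :
    aeval (seqShift 𝕜 E) (X - C a) u = fun n => u (n + 1) - a • u n := by
  ext n
  simp [seqShift, Algebra.algebraMap_eq_smul_one]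

theorem tendsto_zero_of_aeval_seqShift_prod_eq_zero {s : Multiset 𝕜} (hs : ∀ z ∈ s, ‖z‖ < 1)
    {u : ℕ → E} (hu : aeval (seqShift 𝕜 E) (s.map (X - C ·)).prod u = 0) :
    Tendsto u atTop (𝓝 0) := by
  induction s using Multiset.induction_on generalizing u with
  | empty =>
    rw [Multiset.map_zero, Multiset.prod_zero, map_one, Module.End.one_apply] at hu
    exact hu ▸ tendsto_const_nhds
  | cons a s ih =>
    rw [Multiset.map_cons, Multiset.prod_cons, mul_comm, map_mul, Module.End.mul_apply] at hu
    refine tendsto_zero_of_tendsto_sub_smul (hs a (s.mem_cons_self a)) ?_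
    rw [← aeval_seqShift_X_sub_C]
    exact ih (fun z hz => hs z (Multiset.mem_cons_of_mem hz)) hu

theorem tendsto_zero_of_aeval_seqShift_eq_zero {p : 𝕜[X]} (hsplit : p.Splits) (hp : p ≠ 0)
    (hroots : ∀ z ∈ p.roots, ‖z‖ < 1) {u : ℕ → E} (hu : aeval (seqShift 𝕜 E) p u = 0) :
    Tendsto u atTop (𝓝 0) := by
  rw [hsplit.eq_prod_roots, map_mul, aeval_C, Module.End.mul_apply,
    Algebra.algebraMap_eq_smul_one, LinearMap.smul_apply, Module.End.one_apply,
    smul_eq_zero_iff_right (leadingCoeff_ne_zero.2 hp)] at hu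
  exact tendsto_zero_of_aeval_seqShift_prod_eq_zero hroots hu

end Normed

section Cubic

variable {ρ₀ a : ℝ}

theorem abs_lt_one_of_cubic_eq_zero (hρ₀ : 0 < ρ₀) (ha : 0 < a) (hstab : a < 2 - 4 * ρ₀)
    {r : ℝ} (hr : r ^ 3 + (ρ₀ - 1 + a) * r ^ 2 - 2 * ρ₀ * r + ρ₀ = 0) : |r| < 1 := by
  refine abs_lt.2 ⟨?_, ?_⟩
  · by_contra! h
    have hq : 0 ≤ r ^ 2 - 3 * ρ₀ * r + ρ₀ := by nlinarith
    have : 0 < (-r - 1) * (r ^ 2 - 3 * ρ₀ * r + ρ₀) + (2 - 4 * ρ₀ - a) * r ^ 2 :=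
      add_pos_of_nonneg_of_pos (mul_nonneg (by linarith) hq) (by nlinarith)
    linarith
  · by_contra! h
    have hq : 0 ≤ r ^ 2 + ρ₀ * r - ρ₀ := by nlinarith
    have : 0 < (r - 1) * (r ^ 2 + ρ₀ * r - ρ₀) + a * r ^ 2 :=
      add_pos_of_nonneg_of_pos (mul_nonneg (by linarith) hq) (by nlinarith)
    linarith

open Complex in
theorem norm_lt_one_of_cubic_eq_zero (hρ₀ : 0 < ρ₀) (ha : 0 < a) (hstab : a < 2 - 4 * ρ₀)
    {z : ℂ} (hz : z ^ 3 + (ρ₀ - 1 + a) * z ^ 2 - 2 * ρ₀ * z + ρ₀ = 0) : ‖z‖ < 1 := by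
  rcases eq_or_ne z.im 0 with him | him
  · rw [← re_add_im z, him, ofReal_zero, zero_mul, add_zero] at hz ⊢
    rw [norm_real, Real.norm_eq_abs]
    exact abs_lt_one_of_cubic_eq_zero hρ₀ ha hstab (by exact_mod_cast hz)
  · have hquad : z ^ 2 - 2 * z.re * z + normSq z = 0 := by
      have := add_conj z
      push_cast at this
      linear_combination z * this - mul_conj z
    set s := z.re
    set m := normSq z
    obtain ⟨r, hr⟩ : ∃ r, r = -(ρ₀ - 1 + a + 2 * s) := ⟨_, rfl⟩
    have hlin : ((-2 * ρ₀ - m - 2 * s * r : ℝ) : ℂ) * z + ((ρ₀ + r * m : ℝ) : ℂ) = 0 := by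
      have hrC : (r : ℂ) = -(ρ₀ - 1 + a + 2 * s) := by rw [hr]; push_cast; ring
      push_cast
      linear_combination hz - (z - r) * hquad - z ^ 2 * hrC
    have hA : -2 * ρ₀ - m - 2 * s * r = 0 := by
      simpa [him] using congrArg im hlin
    have hB : ρ₀ + r * m = 0 := by
      rwa [hA, ofReal_zero, zero_mul, zero_add, ofReal_eq_zero] at hlin
    have hvalue : ρ₀ * (1 + ρ₀ + a * ρ₀) = (-ρ₀ - r) * ((ρ₀ + s) ^ 2 + z.im ^ 2) := by
      linear_combination ρ₀ ^ 2 * hr - ρ₀ * hA + hB + (-ρ₀ - r) * normSq_apply z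
    have hr_lt : r < -ρ₀ := by
      have : 0 < (-ρ₀ - r) * ((ρ₀ + s) ^ 2 + z.im ^ 2) := hvalue ▸ by positivity
      linarith [pos_of_mul_pos_left this (by positivity)]
    have hm : m < 1 := (mul_lt_iff_lt_one_right (by linarith : 0 < -r)).1 (by linarith)
    rw [← sq_lt_one_iff₀ (norm_nonneg z), ← normSq_eq_norm_sq]
    exact hm

end Cubic

theorem multi_step_converges_scalar_general
    (lam h ρ0 θstar : ℝ) (hlam : 0 < lam) (hh : 0 < h)
    (hρ0 : 0 < ρ0) (hstab : lam * h < 2 - 4 * ρ0)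
    (x : ℕ → ℝ)
    (hx : ∀ k : ℕ, x (k + 3) =
      (1 - ρ0) * x (k + 2) + 2 * ρ0 * x (k + 1) - ρ0 * x k
        - h * lam * (x (k + 2) - θstar)) :
    Filter.Tendsto x Filter.atTop (nhds θstar) := by
  have ha : 0 < h * lam := by positivity
  have hstab' : h * lam < 2 - 4 * ρ0 := by rwa [mul_comm]
  let p : ℂ[X] :=
    X ^ 3 + C ((ρ0 : ℂ) - 1 + (h * lam : ℝ)) * X ^ 2 - C (2 * ρ0 : ℂ) * X + C (ρ0 : ℂ)
  have hp : p ≠ 0 := Monic.ne_zero (by unfold p; monicity!)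
  have hroots : ∀ z ∈ p.roots, ‖z‖ < 1 := fun z hz =>
    norm_lt_one_of_cubic_eq_zero hρ0 ha hstab' (by simpa [p] using (mem_roots hp).1 hz)
  have hsol : aeval (seqShift ℂ ℂ) p (fun n => ((x n - θstar : ℝ) : ℂ)) = 0 := by
    ext n
    simp only [p, map_add, map_sub, map_mul, map_pow, aeval_X, aeval_C,
      Algebra.algebraMap_eq_smul_one, LinearMap.add_apply, LinearMap.sub_apply,
      LinearMap.smul_apply, Module.End.mul_apply, Module.End.one_apply, seqShift_apply,
      seqShift_pow_apply, Pi.add_apply, Pi.sub_apply, Pi.smul_apply, smul_eq_mul, Pi.zero_apply]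
    push_cast [hx]
    ring
  have hy := tendsto_zero_of_aeval_seqShift_eq_zero (IsAlgClosed.splits p) hp hroots hsol
  rwa [← Complex.ofReal_zero, tendsto_ofReal_iff, tendsto_sub_nhds_zero_iff] at hy

/-- Proposition 1, scalar case: the 3-step method converges to `θstar` when
`0 < ρ0 < 1/2` and `λ·h < 2 − 4ρ0`. -/
theorem multi_step_converges_scalar
    (lam h ρ0 θstar : ℝ) (hlam : 0 < lam) (hh : 0 < h)
    (hρ0 : 0 < ρ0) (hρ0' : ρ0 < 1 / 2) (hstab : lam * h < 2 - 4 * ρ0)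
    (x : ℕ → ℝ)
    (hx : ∀ k : ℕ, x (k + 3) =
      (1 - ρ0) * x (k + 2) + 2 * ρ0 * x (k + 1) - ρ0 * x k
        - h * lam * (x (k + 2) - θstar)) :
    Filter.Tendsto x Filter.atTop (nhds θstar) :=
  multi_step_converges_scalar_general lam h ρ0 θstar hlam hh hρ0 hstab x hx
end

section
/- Let ρ0 ∈ ℝ with 0 < ρ0 < 1/2. Then z = 1 is a root of the polynomial ρ(z) = z³ + (ρ0 − 1)z² − 2ρ0·z + ρ0, every complex root z of ρ(z) satisfies |z| ≤ 1, and every complex root z ≠ 1 satisfies |z| < 1 (so 1 is a simple root and the only root on the unit circle). -/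
/-!
`ρ(z) = (z - 1)(z² + ρ₀ z - ρ₀)`, so every root `z ≠ 1` satisfies `z² = ρ₀ (1 - z)`. Taking norms,
`‖z‖² = ρ₀ ‖1 - z‖ ≤ ρ₀ (1 + ‖z‖) < (1 + ‖z‖) / 2`, and `2r² - r - 1 = (2r + 1)(r - 1) < 0` forces `‖z‖ < 1`.
-/

theorem cubic_eq_sub_one_mul_quadratic {R : Type*} [CommRing R] (a z : R) :
    z ^ 3 + (a - 1) * z ^ 2 - 2 * a * z + a = (z - 1) * (z ^ 2 + a * z - a) := by
  ring

theorem lt_one_of_sq_le_mul_one_add {a r : ℝ} (ha : a < 1 / 2) (hr : 0 ≤ r)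
    (h : r ^ 2 ≤ a * (1 + r)) : r < 1 := by
  nlinarith

theorem norm_lt_one_of_sq_add_mul_sub_eq_zero {a : ℝ} (ha₀ : 0 < a) (ha : a < 1 / 2) {z : ℂ}
    (hz : z ^ 2 + a * z - a = 0) : ‖z‖ < 1 := by
  have hsq : z ^ 2 = a * (1 - z) := by linear_combination hz
  refine lt_one_of_sq_le_mul_one_add ha (norm_nonneg z) ?_
  calc ‖z‖ ^ 2 = a * ‖1 - z‖ := by
        rw [← norm_pow, hsq, norm_mul, Complex.norm_real, Real.norm_of_nonneg ha₀.le]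
    _ ≤ a * (1 + ‖z‖) := by
        gcongr
        simpa using norm_sub_le (1 : ℂ) z

/-- Zero-stability of the 3-step method: `1` is a root of
`ρ(z) = z³ + (ρ0 − 1)z² − 2ρ0 z + ρ0`, all roots lie in the closed unit disk,
and every root other than `1` lies strictly inside the unit disk. -/
theorem zero_stability
    (ρ0 : ℝ) (h1 : 0 < ρ0) (h2 : ρ0 < 1 / 2) :
    ((1 : ℂ) ^ 3 + ((ρ0 : ℂ) - 1) * 1 ^ 2 - 2 * (ρ0 : ℂ) * 1 + (ρ0 : ℂ) = 0) ∧
    (∀ z : ℂ, z ^ 3 + ((ρ0 : ℂ) - 1) * z ^ 2 - 2 * (ρ0 : ℂ) * z + (ρ0 : ℂ) = 0 →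
      ‖z‖ ≤ 1) ∧
    (∀ z : ℂ, z ^ 3 + ((ρ0 : ℂ) - 1) * z ^ 2 - 2 * (ρ0 : ℂ) * z + (ρ0 : ℂ) = 0 →
      z ≠ 1 → ‖z‖ < 1) := by
  have root_ne_one : ∀ z : ℂ,
      z ^ 3 + ((ρ0 : ℂ) - 1) * z ^ 2 - 2 * (ρ0 : ℂ) * z + (ρ0 : ℂ) = 0 → z ≠ 1 → ‖z‖ < 1 := by
    intro z hz hne
    rw [cubic_eq_sub_one_mul_quadratic, mul_eq_zero, sub_eq_zero] at hz
    exact norm_lt_one_of_sq_add_mul_sub_eq_zero h1 h2 (hz.resolve_left hne)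
  refine ⟨by ring, fun z hz => ?_, root_ne_one⟩
  rcases eq_or_ne z 1 with rfl | hne
  · simp
  · exact (root_ne_one z hz hne).le
end

section
/- Let ρ0, μ ∈ ℝ with 0 < ρ0 < 1/2 and 0 < μ < 2 − 4ρ0. Then every complex root z of the cubic z³ + (ρ0 − 1 + μ)·z² − 2ρ0·z + ρ0 satisfies |z| < 1. -/
/-!
The cubic has a real root `r ∈ (-1, -ρ0)` by the intermediate value theorem, since its values at
`-1` and `-ρ0` are `4ρ0 + μ - 2 < 0` and `ρ0 + ρ0² + ρ0²μ > 0`. Dividing it by `z - r` leaves a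
real quadratic `z² + Bz + C` with `C = -ρ0 / r ∈ (0, 1)`, and the signs of the cubic at `±1`
transfer to the quadratic, giving `|B| < 1 + C`; these are the Schur–Cohn conditions that put
both roots of the quadratic inside the unit disc.
-/

theorem cubic_eq_mul_of_root {K : Type*} [Field K] {a b c r : K} (hr0 : r ≠ 0)
    (hr : r ^ 3 + a * r ^ 2 + b * r + c = 0) (z : K) :
    z ^ 3 + a * z ^ 2 + b * z + c = (z - r) * (z ^ 2 + (a + r) * z - c / r) := by
  field_simp
  linear_combination z * hr

/-- Schur–Cohn criterion for a real monic quadratic. -/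
theorem Complex.norm_lt_one_of_sq_add_mul_add_eq_zero {B C : ℝ} (hC : C < 1)
    (hB : |B| < 1 + C) {z : ℂ} (hz : z ^ 2 + B * z + C = 0) : ‖z‖ < 1 := by
  obtain ⟨hB_lo, hB_hi⟩ := abs_lt.1 hB
  have hre := congrArg Complex.re hz
  have him := congrArg Complex.im hz
  simp only [pow_two, Complex.add_re, Complex.add_im, Complex.mul_re, Complex.mul_im,
    Complex.ofReal_re, Complex.ofReal_im, Complex.zero_re, Complex.zero_im, zero_mul,
    sub_zero, add_zero] at hre him
  rw [← sq_lt_one_iff₀ (norm_nonneg z), Complex.sq_norm, Complex.normSq_apply]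
  rcases mul_eq_zero.1 (show z.im * (2 * z.re + B) = 0 by linarith) with hy | hx
  · -- `q(x) - q(±1) = (x ∓ 1)(x ± 1 + B)`, which is nonnegative once `±x ≥ 1`
    rw [hy, mul_zero, add_zero]
    have hx_lt : z.re < 1 := by
      by_contra! h
      nlinarith [mul_nonneg (sub_nonneg.2 h) (by linarith : 0 ≤ z.re + 1 + B)]
    have hx_gt : -1 < z.re := by
      by_contra! h
      nlinarith [mul_nonneg (by linarith : 0 ≤ -1 - z.re) (by linarith : 0 ≤ 1 - B - z.re)]
    nlinarith
  · have hnorm : z.re * z.re + z.im * z.im = C := by linear_combination z.re * hx - hre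
    linarith

theorem norm_lt_one_of_cubic_eq_zero_s6 {a b c r : ℝ}
    (hr : r ^ 3 + a * r ^ 2 + b * r + c = 0) (hr1 : |r| < 1) (hcr : |c| < |r|)
    (hp1 : 0 < 1 + a + b + c) (hpm1 : -1 + a - b + c < 0) {z : ℂ}
    (hz : z ^ 3 + a * z ^ 2 + b * z + c = 0) : ‖z‖ < 1 := by
  have hr0 : r ≠ 0 := abs_pos.1 ((abs_nonneg c).trans_lt hcr)
  obtain ⟨hr_lo, hr_hi⟩ := abs_lt.1 hr1
  have hq1 : 0 < 1 + (a + r) + -c / r := by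
    have h := cubic_eq_mul_of_root hr0 hr 1
    refine pos_of_mul_pos_right (a := 1 - r) ?_ (by linarith)
    linear_combination hp1 + h
  have hqm1 : 0 < 1 - (a + r) + -c / r := by
    have h := cubic_eq_mul_of_root hr0 hr (-1)
    refine pos_of_mul_neg_right (a := -1 - r) ?_ (by linarith)
    linear_combination hpm1 - h
  have hC : |-c / r| < 1 := by
    rwa [abs_div, abs_neg, div_lt_one (abs_pos.2 hr0)]
  have hrC : (r : ℂ) ^ 3 + a * r ^ 2 + b * r + c = 0 := by exact_mod_cast congrArg Complex.ofReal hr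
  rw [cubic_eq_mul_of_root (Complex.ofReal_ne_zero.2 hr0) hrC, mul_eq_zero] at hz
  rcases hz with hz | hz
  · rwa [sub_eq_zero.1 hz, Complex.norm_real, Real.norm_eq_abs]
  · refine Complex.norm_lt_one_of_sq_add_mul_add_eq_zero (B := a + r) (abs_lt.1 hC).2
      (abs_lt.2 ⟨by linarith, by linarith⟩) ?_
    push_cast
    linear_combination hz

theorem absolute_stability_general
    (ρ0 μ : ℝ) (h1 : 0 < ρ0)
    (h3 : 0 < μ) (h4 : μ < 2 - 4 * ρ0) :
    ∀ z : ℂ, z ^ 3 + ((ρ0 : ℂ) - 1 + (μ : ℂ)) * z ^ 2 - 2 * (ρ0 : ℂ) * z + (ρ0 : ℂ) = 0 →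
      ‖z‖ < 1 := by
  intro z hz
  let p : ℝ → ℝ := fun t => t ^ 3 + (ρ0 - 1 + μ) * t ^ 2 + -2 * ρ0 * t + ρ0
  have hp_sign : (0 : ℝ) ∈ Set.Ioo (p (-1)) (p (-ρ0)) := by
    constructor
    · linarith
    · simp only [p]
      nlinarith [mul_pos (mul_pos h1 h1) h3]
  obtain ⟨r, ⟨hr_lo, hr_hi⟩, hr⟩ := intermediate_value_Ioo (by linarith)
    (by fun_prop : Continuous p).continuousOn hp_sign
  refine norm_lt_one_of_cubic_eq_zero_s6 hr (abs_lt.2 ⟨hr_lo, by linarith⟩) ?_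
    (by linarith) (by linarith) (by push_cast; linear_combination hz)
  rw [abs_of_pos h1, abs_of_neg (by linarith)]
  linarith

/-- Absolute stability of the 3-step method: for `0 < ρ0 < 1/2` and
`0 < μ < 2 − 4ρ0`, all roots of `z³ + (ρ0 − 1 + μ)z² − 2ρ0 z + ρ0` have modulus
strictly less than `1`. -/
theorem absolute_stability
    (ρ0 μ : ℝ) (h1 : 0 < ρ0) (h2 : ρ0 < 1 / 2)
    (h3 : 0 < μ) (h4 : μ < 2 - 4 * ρ0) :
    ∀ z : ℂ, z ^ 3 + ((ρ0 : ℂ) - 1 + (μ : ℂ)) * z ^ 2 - 2 * (ρ0 : ℂ) * z + (ρ0 : ℂ) = 0 →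
      ‖z‖ < 1 :=
  absolute_stability_general ρ0 μ h1 h3 h4
end

section
/- Let N ≥ 1, let a_1, …, a_N be real numbers with mean ā = (1/N)·Σᵢ aᵢ, let c ∈ ℝ and ρ0 ∈ ℝ, and for p, q ∈ {1, …, N} define M_i(p, q) = (1 − ρ0)·a_i + 2ρ0·a_q − ρ0·a_p + c. Write Δ = Σᵢ (a_i − ā)². Then Σ_{i=1}^{N} (1/N²)·Σ_{p=1}^{N} Σ_{q=1}^{N} ( M_i(p, q) − (ā + c) )² = (1 − 2ρ0 + 6ρ0²)·Δ. -/
/-!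
Writing `b i = a i - ā`, the deviation of `M_i(p, q)` from `ā + c` is
`(1 - ρ0) b i - ρ0 b p + 2 ρ0 b q` because the coefficients sum to `1`. Since `∑ b = 0`, every
cross term vanishes when summed over an independent index, so averaging the square over `(p, q)`
and summing over `i` leaves `((1 - ρ0)² + ρ0² + (2 ρ0)²) Δ`.
-/

open Finset

section

variable {ι : Type*} [Fintype ι]

theorem sum_sub_mean_eq_zero {K : Type*} [Field K] [CharZero K] (a : ι → K) :
    ∑ i, (a i - 1 / Fintype.card ι * ∑ j, a j) = 0 := by
  rcases isEmpty_or_nonempty ι with _ | _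
  · simp
  · simp [sum_sub_distrib]

theorem sum_add_mul_sq_of_sum_eq_zero {R : Type*} [CommRing R] {b : ι → R}
    (hb : ∑ j, b j = 0) (u y : R) :
    ∑ j, (u + y * b j) ^ 2 = Fintype.card ι * u ^ 2 + y ^ 2 * ∑ j, b j ^ 2 := by
  have h : ∀ j, (u + y * b j) ^ 2 = u ^ 2 + 2 * u * y * b j + y ^ 2 * b j ^ 2 := fun j => by ring
  simp only [h, sum_add_distrib, ← mul_sum, hb, sum_const, card_univ, nsmul_eq_mul]
  ring

theorem sum_sum_sum_sq_of_sum_eq_zero {R : Type*} [CommRing R] {b : ι → R}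
    (hb : ∑ j, b j = 0) (x y z : R) :
    ∑ i, ∑ p, ∑ q, (x * b i + y * b p + z * b q) ^ 2
      = Fintype.card ι ^ 2 * ((x ^ 2 + y ^ 2 + z ^ 2) * ∑ j, b j ^ 2) := by
  simp only [sum_add_mul_sq_of_sum_eq_zero hb, sum_add_distrib, mul_pow, ← mul_sum, sum_const,
    card_univ, nsmul_eq_mul]
  ring

theorem sum_mean_sum_sum_sq_of_sum_eq_zero {K : Type*} [Field K] [CharZero K] {b : ι → K}
    (hb : ∑ j, b j = 0) (x y z : K) :
    ∑ i, 1 / (Fintype.card ι : K) ^ 2 * ∑ p, ∑ q, (x * b i + y * b p + z * b q) ^ 2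
      = (x ^ 2 + y ^ 2 + z ^ 2) * ∑ j, b j ^ 2 := by
  rcases isEmpty_or_nonempty ι with _ | _
  · simp
  · rw [← mul_sum, sum_sum_sum_sq_of_sum_eq_zero hb]
    field_simp

end

theorem multi_step_dispersion_identity_general
    (N : ℕ) (a : Fin N → ℝ) (c ρ0 : ℝ)
    (abar : ℝ) (habar : abar = (1 / (N : ℝ)) * ∑ i : Fin N, a i)
    (Δ : ℝ) (hΔ : Δ = ∑ i : Fin N, (a i - abar) ^ 2) :
    ∑ i : Fin N, (1 / (N : ℝ) ^ 2) *
        ∑ p : Fin N, ∑ q : Fin N,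
          (((1 - ρ0) * a i + 2 * ρ0 * a q - ρ0 * a p + c) - (abar + c)) ^ 2
      = (1 - 2 * ρ0 + 6 * ρ0 ^ 2) * Δ := by
  have hcentered : ∑ i, (a i - abar) = 0 := by
    simpa [habar] using sum_sub_mean_eq_zero a
  have hdev : ∀ i p q : Fin N, ((1 - ρ0) * a i + 2 * ρ0 * a q - ρ0 * a p + c) - (abar + c)
      = (1 - ρ0) * (a i - abar) + -ρ0 * (a p - abar) + 2 * ρ0 * (a q - abar) := by
    intros; ring
  have hmean := sum_mean_sum_sum_sq_of_sum_eq_zero hcentered (1 - ρ0) (-ρ0) (2 * ρ0)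
  rw [Fintype.card_fin] at hmean
  simp only [hdev, hmean, hΔ]
  ring

/-- Dispersion identity from the proof of Proposition 2: the expected squared
deviations of the multi-step updated learners around `ā + c` sum to
`(1 − 2ρ0 + 6ρ0²)·Δ`. -/
theorem multi_step_dispersion_identity
    (N : ℕ) (hN : 1 ≤ N) (a : Fin N → ℝ) (c ρ0 : ℝ)
    (abar : ℝ) (habar : abar = (1 / (N : ℝ)) * ∑ i : Fin N, a i)
    (Δ : ℝ) (hΔ : Δ = ∑ i : Fin N, (a i - abar) ^ 2) :
    ∑ i : Fin N, (1 / (N : ℝ) ^ 2) *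
        ∑ p : Fin N, ∑ q : Fin N,
          (((1 - ρ0) * a i + 2 * ρ0 * a q - ρ0 * a p + c) - (abar + c)) ^ 2
      = (1 - 2 * ρ0 + 6 * ρ0 ^ 2) * Δ :=
  multi_step_dispersion_identity_general N a c ρ0 abar habar Δ hΔ
end
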